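/- arXiv:1109.3929 — 2 statements merged into one kernel-verified Lean document; each statement's English description precedes it below -/
import Mathlib

section
/- For a path P_n with n ≥ 4, the total bondage number is b_t(P_n) = 2 if n ≡ 2 (mod 4), and b_t(P_n) = 1 otherwise. -/
open SimpleGraph

/-- The grid graph `G_{n,m}`, the Cartesian (box) product of paths `P_n` and `P_m`. -/
def gridGraph (n m : ℕ) : SimpleGraph (Fin n × Fin m) :=
  (pathGraph n) □ (pathGraph m)

/-- `D` is a total dominating set of `G`: every vertex has a neighbor in `D`. -/
def IsTotalDomSet {V : Type*} (G : SimpleGraph V) (D : Set V) : Prop :=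
  ∀ v : V, ∃ u ∈ D, G.Adj v u

/-- The total domination number of `G`. -/
noncomputable def totalDomNum {V : Type*} [Fintype V] (G : SimpleGraph V) : ℕ :=
  sInf {k | ∃ D : Finset V, IsTotalDomSet G ↑D ∧ D.card = k}

/-- The total bondage number: the least number of edges whose removal increases
the total domination number. -/
noncomputable def totalBondage {V : Type*} [Fintype V] (G : SimpleGraph V) : ℕ :=
  sInf {k | ∃ F : Finset (Sym2 V), ↑F ⊆ G.edgeSet ∧ F.card = k ∧
    totalDomNum (G.deleteEdges ↑F) > totalDomNum G}

/-!
Let `G` be a graph whose edges join consecutive integers, and let `[l, r)` be a segment of `m`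
vertices on which `G` is a path cut off from the rest. A total dominating set `D` dominates each
colour class of the segment from the other class, every vertex of `D` covering at most two
vertices, so `|D ∩ [l, r)| ≥ ⌈⌈m/2⌉/2⌉ + ⌈⌊m/2⌋/2⌋`; the offsets `≡ 1, 2 (mod 4)`, together with
the penultimate vertex when the last one is left over, attain this bound. Deleting edges of `P_n`
cuts it into such segments, so its total domination number becomes the sum of these values.

If `n ≢ 2 (mod 4)`, cutting off a `P_2` already raises `γ_t`. If `n ≡ 2 (mod 4)`, a single cut
either isolates an end vertex, when no total dominating set is left at all, or splits `P_n` into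
two segments whose values add up to at most `γ_t(P_n) = n/2 + 1`; cutting off two copies of `P_2`
raises `γ_t`.
-/

open Finset

/-- `⌈⌈m/2⌉/2⌉ + ⌈⌊m/2⌋/2⌋`, which is `γ_t(P_m)` for `m ≥ 2`. -/
def pathTotalDomNum (m : ℕ) : ℕ := ((m + 1) / 2 + 1) / 2 + (m / 2 + 1) / 2

lemma card_le_two_mul_card_of_forall_exists_adj {s t : Finset ℕ}
    (h : ∀ x ∈ s, ∃ y ∈ t, x + 1 = y ∨ y + 1 = x) : #s ≤ 2 * #t := by
  have := card_mul_le_card_mul (fun x y => x + 1 = y ∨ y + 1 = x) (m := 1) (n := 2)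
    (fun x hx => by
      obtain ⟨y, hy, hxy⟩ := h x hx
      exact card_pos.2 ⟨y, (mem_bipartiteAbove _).2 ⟨hy, hxy⟩⟩)
    (fun y _ => calc
      #(s.bipartiteBelow _ y) ≤ #({y - 1, y + 1} : Finset ℕ) := card_le_card fun x hx => by
          simp only [mem_bipartiteBelow] at hx
          simp only [mem_insert, mem_singleton]
          omega
      _ ≤ 2 := card_le_two)
  rwa [mul_one, mul_comm] at this

lemma card_filter_range_mod_four (m : ℕ) :
    #{p ∈ range m | p % 4 = 1 ∨ p % 4 = 2} = (m + 2) / 4 + (m + 1) / 4 := by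
  induction m with
  | zero => rfl
  | succ m ih =>
    rw [range_add_one, filter_insert]
    split_ifs with h
    · rw [card_insert_of_notMem (by simp), ih]; omega
    · rw [ih]; omega

lemma card_filter_range_le_pathTotalDomNum {m : ℕ} (hm : 2 ≤ m) :
    #{p ∈ range m | p % 4 = 1 ∨ p % 4 = 2 ∨ p + 2 = m} ≤ pathTotalDomNum m := by
  have hP := card_filter_range_mod_four m
  unfold pathTotalDomNum
  by_cases h : (m - 2) % 4 = 1 ∨ (m - 2) % 4 = 2
  · rw [filter_congr fun p _ => (by omega : p % 4 = 1 ∨ p % 4 = 2 ∨ p + 2 = m ↔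
      p % 4 = 1 ∨ p % 4 = 2)]
    omega
  · calc _ ≤ #({p ∈ range m | p % 4 = 1 ∨ p % 4 = 2} ∪ {m - 2}) := card_le_card fun p => by
          simp only [mem_filter, mem_union, mem_singleton, mem_range]; omega
      _ ≤ _ := card_union_le _ _
      _ ≤ _ := by rw [card_singleton]; omega

section

variable {V : Type*} [Fintype V] {G : SimpleGraph V}

theorem totalDomNum_le_card {D : Finset V} (hD : IsTotalDomSet G ↑D) : totalDomNum G ≤ #D :=
  Nat.sInf_le ⟨D, hD, rfl⟩

theorem exists_card_eq_totalDomNum {D : Finset V} (hD : IsTotalDomSet G ↑D) :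
    ∃ D' : Finset V, IsTotalDomSet G ↑D' ∧ #D' = totalDomNum G :=
  Nat.sInf_mem (s := {k | ∃ D : Finset V, IsTotalDomSet G ↑D ∧ #D = k}) ⟨_, D, hD, rfl⟩

/-- Without a total dominating set, `totalDomNum G` is the junk value `sInf ∅ = 0`. -/
theorem totalDomNum_eq_zero_of_forall_not_adj (v : V) (hv : ∀ u, ¬G.Adj v u) :
    totalDomNum G = 0 := by
  have : {k | ∃ D : Finset V, IsTotalDomSet G ↑D ∧ #D = k} = ∅ :=
    Set.eq_empty_of_forall_notMem fun _ ⟨D, hD, _⟩ => by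
      obtain ⟨u, -, hvu⟩ := hD v
      exact hv u hvu
  rw [totalDomNum, this, Nat.sInf_empty]

theorem totalBondage_eq_card (F : Finset (Sym2 V)) (hF : ↑F ⊆ G.edgeSet)
    (hlt : totalDomNum G < totalDomNum (G.deleteEdges ↑F))
    (hmin : ∀ F' : Finset (Sym2 V), ↑F' ⊆ G.edgeSet → #F' < #F →
      totalDomNum (G.deleteEdges ↑F') ≤ totalDomNum G) :
    totalBondage G = #F := by
  refine le_antisymm (Nat.sInf_le ⟨F, hF, rfl, hlt⟩) (le_csInf ⟨_, F, hF, rfl, hlt⟩ ?_)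
  rintro k ⟨F', hF', rfl, hlt'⟩
  by_contra! hk
  exact (hmin F' hF' hk).not_gt hlt'

end

variable {n : ℕ}

structure IsPathSegment (G : SimpleGraph (Fin n)) (l r : ℕ) : Prop where
  right_le : r ≤ n
  adj_iff : ∀ u v : Fin n, l ≤ u.val → u.val < r →
    (G.Adj u v ↔ l ≤ v.val ∧ v.val < r ∧ (u.val + 1 = v.val ∨ v.val + 1 = u.val))

/-- `k` is the share of the vertices `[l, r)` in the total domination number of `G`. -/
structure IsTotalDomNumOn (G : SimpleGraph (Fin n)) (l r k : ℕ) : Prop where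
  le_card : ∀ D : Finset (Fin n), IsTotalDomSet G ↑D → k ≤ #{v ∈ D | l ≤ v.val ∧ v.val < r}
  exists_dominating : ∃ D : Finset (Fin n), #D ≤ k ∧
    ∀ v : Fin n, l ≤ v.val → v.val < r → ∃ u ∈ D, G.Adj v u

namespace IsPathSegment

variable {G : SimpleGraph (Fin n)} {l r : ℕ}

theorem pathTotalDomNum_le_card (hG : IsPathSegment G l r) {D : Finset (Fin n)}
    (hD : IsTotalDomSet G ↑D) : pathTotalDomNum (r - l) ≤ #{v ∈ D | l ≤ v.val ∧ v.val < r} := by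
  set A := {v ∈ D | l ≤ v.val ∧ v.val < r}
  have hcover : ∀ x, l ≤ x → x < r → ∃ u ∈ A, x + 1 = u.val ∨ u.val + 1 = x := by
    intro x hl hr
    obtain ⟨u, hu, hxu⟩ := hD ⟨x, by linarith [hG.right_le]⟩
    obtain ⟨hlu, hur, hxu⟩ := (hG.adj_iff _ u hl hr).1 hxu
    exact ⟨u, mem_filter.2 ⟨hu, hlu, hur⟩, hxu⟩
  -- The vertices `l + q + 2i` are dominated by vertices of `A` of the other parity.
  have hclass : ∀ q k, (∀ i < k, l + q + 2 * i < r) →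
      k ≤ 2 * #{u ∈ A | (u.val - l) % 2 ≠ q % 2} := by
    intro q k hk
    calc k = #((range k).image fun i => l + q + 2 * i) := by
          rw [card_image_of_injective _ fun i j h => by omega, card_range]
      _ ≤ 2 * #({u ∈ A | (u.val - l) % 2 ≠ q % 2}.image Fin.val) := by
          refine card_le_two_mul_card_of_forall_exists_adj ?_
          simp only [mem_image, mem_range]
          rintro _ ⟨i, hi, rfl⟩
          obtain ⟨u, hu, hxu⟩ := hcover _ (by omega) (hk i hi)
          have hlu := (mem_filter.1 hu).2
          exact ⟨u.val, ⟨u, mem_filter.2 ⟨hu, by omega⟩, rfl⟩, hxu⟩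
      _ = _ := by rw [card_image_of_injective _ Fin.val_injective]
  have heven := hclass 0 ((r - l + 1) / 2) fun i hi => by omega
  have hodd := hclass 1 ((r - l) / 2) fun i hi => by omega
  have hsplit : #{u ∈ A | (u.val - l) % 2 ≠ 0 % 2} + #{u ∈ A | (u.val - l) % 2 ≠ 1 % 2} ≤ #A := by
    rw [← card_union_of_disjoint (disjoint_filter.2 fun u _ h₀ h₁ => by omega)]
    exact card_le_card (union_subset (filter_subset _ _) (filter_subset _ _))
  unfold pathTotalDomNum
  omega

theorem exists_dominating (hG : IsPathSegment G l r) (hlr : l + 2 ≤ r) :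
    ∃ D : Finset (Fin n), #D ≤ pathTotalDomNum (r - l) ∧
      ∀ v : Fin n, l ≤ v.val → v.val < r → ∃ u ∈ D, G.Adj v u := by
  refine ⟨({v : Fin n | l ≤ v.val ∧ v.val < r ∧
    ((v.val - l) % 4 = 1 ∨ (v.val - l) % 4 = 2 ∨ v.val - l + 2 = r - l)} : Finset (Fin n)), ?_, ?_⟩
  · refine le_trans (card_le_card_of_injOn (fun v => v.val - l) (fun v hv => ?_)
      fun u hu v hv h => ?_) (card_filter_range_le_pathTotalDomNum (by omega))
    · simp only [mem_coe, mem_filter, mem_univ, true_and, mem_range] at hv ⊢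
      omega
    · simp only [mem_coe, mem_filter, mem_univ, true_and] at hu hv h
      exact Fin.ext (by omega)
  · intro v hl hr
    by_cases h : (v.val - l) % 4 ≤ 1 ∧ v.val + 1 < r
    · refine ⟨⟨v.val + 1, by linarith [hG.right_le]⟩, ?_,
        (hG.adj_iff v _ hl hr).2 ⟨by simp only; omega, h.2, Or.inl rfl⟩⟩
      simp only [mem_filter, mem_univ, true_and]
      omega
    · refine ⟨⟨v.val - 1, by omega⟩, ?_,
        (hG.adj_iff v _ hl hr).2 (by simp only; omega)⟩
      simp only [mem_filter, mem_univ, true_and]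
      omega

theorem isTotalDomNumOn (hG : IsPathSegment G l r) (hlr : l + 2 ≤ r) :
    IsTotalDomNumOn G l r (pathTotalDomNum (r - l)) :=
  ⟨fun _ hD => hG.pathTotalDomNum_le_card hD, hG.exists_dominating hlr⟩

end IsPathSegment

namespace IsTotalDomNumOn

variable {G : SimpleGraph (Fin n)} {l c r k₁ k₂ : ℕ}

theorem append (h₁ : IsTotalDomNumOn G l c k₁) (h₂ : IsTotalDomNumOn G c r k₂) (hlc : l ≤ c)
    (hcr : c ≤ r) : IsTotalDomNumOn G l r (k₁ + k₂) where
  le_card D hD := calc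
    k₁ + k₂ ≤ #{v ∈ D | l ≤ v.val ∧ v.val < c} + #{v ∈ D | c ≤ v.val ∧ v.val < r} :=
      add_le_add (h₁.le_card D hD) (h₂.le_card D hD)
    _ = #({v ∈ D | l ≤ v.val ∧ v.val < c} ∪ {v ∈ D | c ≤ v.val ∧ v.val < r}) :=
      (card_union_of_disjoint (disjoint_filter.2 fun _ _ h h' => by omega)).symm
    _ ≤ #{v ∈ D | l ≤ v.val ∧ v.val < r} :=
      card_le_card fun v => by
        simp only [mem_union, mem_filter]
        rintro (⟨hv, h⟩ | ⟨hv, h⟩) <;> exact ⟨hv, by omega⟩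
  exists_dominating := by
    obtain ⟨D₁, hD₁, hdom₁⟩ := h₁.exists_dominating
    obtain ⟨D₂, hD₂, hdom₂⟩ := h₂.exists_dominating
    refine ⟨D₁ ∪ D₂, (card_union_le _ _).trans (add_le_add hD₁ hD₂), fun v hl hr => ?_⟩
    rcases lt_or_ge v.val c with hc | hc
    · obtain ⟨u, hu, hvu⟩ := hdom₁ v hl hc
      exact ⟨u, mem_union_left _ hu, hvu⟩
    · obtain ⟨u, hu, hvu⟩ := hdom₂ v hc hr
      exact ⟨u, mem_union_right _ hu, hvu⟩

theorem totalDomNum_eq {k : ℕ} (h : IsTotalDomNumOn G 0 n k) : totalDomNum G = k := by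
  obtain ⟨D, hDk, hdom⟩ := h.exists_dominating
  have hD : IsTotalDomSet G ↑D := fun v => hdom v v.val.zero_le v.isLt
  obtain ⟨D', hD', hcard⟩ := exists_card_eq_totalDomNum hD
  refine le_antisymm ((totalDomNum_le_card hD).trans hDk) ?_
  calc k ≤ #{v ∈ D' | 0 ≤ v.val ∧ v.val < n} := h.le_card D' hD'
    _ ≤ #D' := card_filter_le _ _
    _ = totalDomNum G := hcard

end IsTotalDomNumOn

theorem isPathSegment_deleteEdges {F : Set (Sym2 (Fin n))} {l r : ℕ} (hrn : r ≤ n)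
    (hcut : ∀ u v : Fin n, u.val + 1 = v.val → (v.val = l ∨ v.val = r) → s(u, v) ∈ F)
    (hkeep : ∀ u v : Fin n, u.val + 1 = v.val → l < v.val → v.val < r → s(u, v) ∉ F) :
    IsPathSegment ((pathGraph n).deleteEdges F) l r := by
  refine ⟨hrn, fun u v hl hr => ?_⟩
  rw [deleteEdges_adj, pathGraph_adj]
  constructor
  · rintro ⟨h | h, hF⟩
    · have : v.val ≠ r := fun hv => hF (hcut u v h (Or.inr hv))
      omega
    · have : u.val ≠ l := fun hu => hF (Sym2.eq_swap ▸ hcut v u h (Or.inl hu))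
      omega
  · rintro ⟨hl', hr', h | h⟩
    · exact ⟨Or.inl h, hkeep u v h (by omega) hr'⟩
    · exact ⟨Or.inr h, Sym2.eq_swap ▸ hkeep v u h (by omega) hr⟩

theorem totalDomNum_pathGraph (hn : 2 ≤ n) : totalDomNum (pathGraph n) = pathTotalDomNum n := by
  have hG : IsPathSegment (pathGraph n) 0 n := by
    simpa using isPathSegment_deleteEdges (F := ∅) le_rfl (fun u v _ _ => by omega) (by simp)
  simpa using (hG.isTotalDomNumOn hn).totalDomNum_eq

def pathEdge (a : ℕ) (h : a + 1 < n) : Sym2 (Fin n) := s(⟨a, by omega⟩, ⟨a + 1, h⟩)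

theorem pathEdge_mem_edgeSet {a : ℕ} (h : a + 1 < n) : pathEdge a h ∈ (pathGraph n).edgeSet :=
  pathGraph_adj.2 (Or.inl rfl)

theorem mk_eq_pathEdge_iff {u v : Fin n} (huv : u.val + 1 = v.val) {a : ℕ} (h : a + 1 < n) :
    s(u, v) = pathEdge a h ↔ v.val = a + 1 := by
  simp only [pathEdge, Sym2.eq_iff, Fin.ext_iff]
  omega

theorem exists_eq_pathEdge {e : Sym2 (Fin n)} (he : e ∈ (pathGraph n).edgeSet) :
    ∃ a h, e = pathEdge a h := by
  induction e using Sym2.ind with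
  | _ u v =>
    rw [mem_edgeSet] at he
    rcases pathGraph_adj.1 he with huv | huv
    · exact ⟨u.val, by omega, (mk_eq_pathEdge_iff huv _).2 huv.symm⟩
    · exact ⟨v.val, by omega, Sym2.eq_swap.trans ((mk_eq_pathEdge_iff huv _).2 huv.symm)⟩

theorem totalDomNum_deleteEdges_pathEdge {a : ℕ} (h : a + 1 < n) (ha : 1 ≤ a) (han : a + 3 ≤ n) :
    totalDomNum ((pathGraph n).deleteEdges ↑({pathEdge a h} : Finset (Sym2 (Fin n)))) =
      pathTotalDomNum (a + 1) + pathTotalDomNum (n - (a + 1)) := by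
  have hmem : ∀ u v : Fin n, u.val + 1 = v.val →
      (s(u, v) ∈ ({pathEdge a h} : Finset (Sym2 (Fin n))) ↔ v.val = a + 1) := fun u v huv => by
    rw [mem_singleton, mk_eq_pathEdge_iff huv]
  have h₁ := isPathSegment_deleteEdges (l := 0) (r := a + 1) (by omega)
    (fun u v huv _ => (hmem u v huv).2 (by omega))
    (fun u v huv _ _ => (hmem u v huv).not.2 (by omega))
  have h₂ := isPathSegment_deleteEdges (l := a + 1) (r := n) le_rfl
    (fun u v huv _ => (hmem u v huv).2 (by omega))
    (fun u v huv _ _ => (hmem u v huv).not.2 (by omega))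
  simpa using ((h₁.isTotalDomNumOn (by omega)).append (h₂.isTotalDomNumOn (by omega)) (by omega)
    (by omega)).totalDomNum_eq

theorem totalDomNum_deleteEdges_pathEdge_pair {a b : ℕ} (ha' : a + 1 < n) (hb' : b + 1 < n)
    (ha : 1 ≤ a) (hab : a + 2 ≤ b) (hbn : b + 3 ≤ n) :
    totalDomNum ((pathGraph n).deleteEdges
        ↑({pathEdge a ha', pathEdge b hb'} : Finset (Sym2 (Fin n)))) =
      pathTotalDomNum (a + 1) + pathTotalDomNum (b - a) + pathTotalDomNum (n - (b + 1)) := by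
  have hmem : ∀ u v : Fin n, u.val + 1 = v.val →
      (s(u, v) ∈ ({pathEdge a ha', pathEdge b hb'} : Finset (Sym2 (Fin n))) ↔
        v.val = a + 1 ∨ v.val = b + 1) := fun u v huv => by
    rw [mem_insert, mem_singleton, mk_eq_pathEdge_iff huv, mk_eq_pathEdge_iff huv]
  have h₁ := isPathSegment_deleteEdges (l := 0) (r := a + 1) (by omega)
    (fun u v huv _ => (hmem u v huv).2 (by omega))
    (fun u v huv _ _ => (hmem u v huv).not.2 (by omega))
  have h₂ := isPathSegment_deleteEdges (l := a + 1) (r := b + 1) (by omega)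
    (fun u v huv _ => (hmem u v huv).2 (by omega))
    (fun u v huv _ _ => (hmem u v huv).not.2 (by omega))
  have h₃ := isPathSegment_deleteEdges (l := b + 1) (r := n) le_rfl
    (fun u v huv _ => (hmem u v huv).2 (by omega))
    (fun u v huv _ _ => (hmem u v huv).not.2 (by omega))
  have := (((h₁.isTotalDomNumOn (by omega)).append (h₂.isTotalDomNumOn (by omega)) (by omega)
    (by omega)).append (h₃.isTotalDomNumOn (by omega)) (by omega) (by omega)).totalDomNum_eq
  rwa [Nat.sub_zero, Nat.add_sub_add_right] at this

theorem totalDomNum_deleteEdges_pathEdge_eq_zero {a : ℕ} (h : a + 1 < n) (ha : a = 0 ∨ a + 2 = n) :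
    totalDomNum ((pathGraph n).deleteEdges ↑({pathEdge a h} : Finset (Sym2 (Fin n)))) = 0 := by
  rcases ha with rfl | rfl
  · refine totalDomNum_eq_zero_of_forall_not_adj ⟨0, by omega⟩ fun u hu => ?_
    rw [deleteEdges_adj, pathGraph_adj, mem_coe, mem_singleton] at hu
    obtain ⟨huv | huv, hne⟩ := hu
    · exact hne ((mk_eq_pathEdge_iff huv h).2 huv.symm)
    · exact absurd huv (Nat.succ_ne_zero _)
  · refine totalDomNum_eq_zero_of_forall_not_adj ⟨a + 1, h⟩ fun u hu => ?_
    rw [deleteEdges_adj, pathGraph_adj, mem_coe, mem_singleton] at hu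
    obtain ⟨huv | huv, hne⟩ := hu
    · exact absurd u.isLt (by simp only at huv; omega)
    · exact hne (Sym2.eq_swap.trans ((mk_eq_pathEdge_iff huv h).2 rfl))

theorem totalDomNum_deleteEdges_le_of_card_le_one (hmod : n % 4 = 2) {F : Finset (Sym2 (Fin n))}
    (hF : ↑F ⊆ (pathGraph n).edgeSet) (hcard : #F ≤ 1) :
    totalDomNum ((pathGraph n).deleteEdges ↑F) ≤ totalDomNum (pathGraph n) := by
  rcases Nat.le_one_iff_eq_zero_or_eq_one.1 hcard with h₀ | h₁
  · rw [card_eq_zero.1 h₀, coe_empty, deleteEdges_empty]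
  obtain ⟨e, rfl⟩ := card_eq_one.1 h₁
  obtain ⟨a, h, rfl⟩ := exists_eq_pathEdge (hF (mem_coe.2 (mem_singleton_self _)))
  by_cases hend : a = 0 ∨ a + 2 = n
  · rw [totalDomNum_deleteEdges_pathEdge_eq_zero h hend]
    exact Nat.zero_le _
  · rw [totalDomNum_deleteEdges_pathEdge h (by omega) (by omega), totalDomNum_pathGraph (by omega)]
    unfold pathTotalDomNum
    omega

theorem total_bondage_path (n : ℕ) (hn : 4 ≤ n) :
    totalBondage (pathGraph n) = if n % 4 = 2 then 2 else 1 := by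
  have hP : totalDomNum (pathGraph n) = pathTotalDomNum n := totalDomNum_pathGraph (by omega)
  split_ifs with hmod
  · have hpair : #({pathEdge 1 (by omega), pathEdge 3 (by omega)} : Finset (Sym2 (Fin n))) = 2 :=
      card_pair fun h => by simpa using (mk_eq_pathEdge_iff rfl _).1 h
    rw [← hpair]
    refine totalBondage_eq_card _ ?_ ?_ fun F hF hcard =>
      totalDomNum_deleteEdges_le_of_card_le_one hmod hF (by omega)
    · simp only [coe_insert, coe_singleton, Set.insert_subset_iff, Set.singleton_subset_iff]
      exact ⟨pathEdge_mem_edgeSet _, pathEdge_mem_edgeSet _⟩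
    · rw [hP, totalDomNum_deleteEdges_pathEdge_pair _ _ le_rfl le_rfl (by omega)]
      unfold pathTotalDomNum
      omega
  · rw [← card_singleton (pathEdge 1 (n := n) (by omega))]
    refine totalBondage_eq_card _ (by simpa using pathEdge_mem_edgeSet _) ?_ fun F _ hF => ?_
    · rw [hP, totalDomNum_deleteEdges_pathEdge _ le_rfl (by omega)]
      unfold pathTotalDomNum
      omega
    · rw [card_singleton, Nat.lt_one_iff, card_eq_zero] at hF
      rw [hF, coe_empty, deleteEdges_empty]
end

section
/- If n ≡ 1 (mod 3), then for each j ∈ {1, 2}, the graph G_{n,2} − x_{nj} (the grid graph with the corner vertex x_{nj} deleted) satisfies γ_t(G_{n,2} − x_{nj}) = γ_t(G_{n,2}) − 1. -/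
open SimpleGraph

noncomputable instance {V : Type*} [Fintype V] (s : Set V) : Fintype ↑s :=
  Fintype.ofFinite _


/-!
Columns `0, 3, 6, …` of `G_{n,2}` form an open packing: no two of their vertices have a
common neighbour, so a total dominating set needs a separate vertex to dominate each of them.
Columns `1, 4, 7, …` (the last one moved back into range) form a total dominating set of the
same size `2⌊(n+2)/3⌋`. For `n = 3k + 1`, deleting a corner `x` of the last column removes one
vertex of the packing. The other vertex of that column can then only be dominated by its
neighbour in column `3k - 1`, and that neighbour together with columns `1, 4, …, 3k - 2` is a
total dominating set of size `2k + 1`.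
-/

open Finset

namespace SimpleGraph

variable {V : Type*} {G : SimpleGraph V}

def IsOpenPacking (G : SimpleGraph V) (W : Set V) : Prop :=
  W.Pairwise fun u v => ∀ w, G.Adj u w → ¬G.Adj v w

theorem IsOpenPacking.subset {W W' : Set V} (hW : G.IsOpenPacking W) (h : W' ⊆ W) :
    G.IsOpenPacking W' :=
  Set.Pairwise.mono h hW

theorem IsOpenPacking.card_le {W D : Finset V} (hW : G.IsOpenPacking W)
    (hD : ∀ w ∈ W, ∃ u ∈ D, G.Adj w u) : #W ≤ #D := by
  choose! f hfD hf using hD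
  refine card_le_card_of_injOn f hfD fun u hu v hv huv => ?_
  by_contra hne
  exact hW hu hv hne (f u) (hf u hu) (huv ▸ hf v hv)

theorem totalDomNum_eq_of_isOpenPacking [Fintype V] {D W : Finset V}
    (hD : IsTotalDomSet G D) (hW : G.IsOpenPacking W) (hcard : #W = #D) :
    totalDomNum G = #D :=
  le_antisymm (Nat.sInf_le ⟨D, hD, rfl⟩) <| le_csInf ⟨_, D, hD, rfl⟩
    fun _ ⟨_, hE, hk⟩ => hk ▸ hcard ▸ hW.card_le fun w _ => hE w

theorem totalDomNum_induce_eq_of_isOpenPacking {S : Set V} [Fintype S] {D W : Finset V}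
    (hDS : ↑D ⊆ S) (hD : ∀ v ∈ S, ∃ u ∈ D, G.Adj v u) (hWS : ↑W ⊆ S)
    (hW : G.IsOpenPacking W) (hcard : #W = #D) : totalDomNum (G.induce S) = #D := by
  classical
  have card_subtype_eq {s : Finset V} (hs : ↑s ⊆ S) : #(s.subtype (· ∈ S)) = #s := by
    rw [card_subtype, filter_true_of_mem fun v hv => hs hv]
  rw [← card_subtype_eq hDS]
  refine totalDomNum_eq_of_isOpenPacking (W := W.subtype (· ∈ S)) ?_ ?_
    (by rw [card_subtype_eq hDS, card_subtype_eq hWS, hcard])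
  · rintro ⟨v, hv⟩
    obtain ⟨u, hu, hvu⟩ := hD v hv
    exact ⟨⟨u, hDS hu⟩, by simpa using hu, hvu⟩
  · intro u hu v hv hne w
    exact hW (by simpa using hu) (by simpa using hv) (Subtype.coe_injective.ne hne) w

end SimpleGraph

theorem gridGraph_two_adj {n : ℕ} {u v : Fin n × Fin 2} :
    (gridGraph n 2).Adj u v ↔
      ((u.1 : ℕ) + 1 = v.1 ∨ (v.1 : ℕ) + 1 = u.1) ∧ (u.2 : ℕ) = v.2 ∨
        (u.1 : ℕ) = v.1 ∧ (u.2 : ℕ) ≠ v.2 := by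
  have := u.2.isLt; have := v.2.isLt
  simp only [gridGraph, boxProd_adj, pathGraph_adj, Fin.ext_iff]
  omega

def gridColumns (n : ℕ) (C : Finset ℕ) : Finset (Fin n × Fin 2) :=
  univ.filter fun v => (v.1 : ℕ) ∈ C

@[simp]
theorem mem_gridColumns {n : ℕ} {C : Finset ℕ} {v : Fin n × Fin 2} :
    v ∈ gridColumns n C ↔ (v.1 : ℕ) ∈ C := by
  simp [gridColumns]

theorem card_gridColumns {n : ℕ} {C : Finset ℕ} (hC : ∀ c ∈ C, c < n) :
    #(gridColumns n C) = 2 * #C := by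
  have : #C * 2 = #(C ×ˢ (univ : Finset (Fin 2))) := by simp
  rw [mul_comm, this]
  refine card_nbij (fun v => ((v.1 : ℕ), v.2)) (fun v hv => by simpa using hv) ?_ ?_
  · intro u _ v _ huv
    simp only [Prod.mk.injEq] at huv
    exact Prod.ext (Fin.ext huv.1) huv.2
  · rintro ⟨c, r⟩ hc
    rw [mem_coe, mem_product] at hc
    exact ⟨(⟨c, hC c hc.1⟩, r), by simpa using hc.1, rfl⟩

theorem exists_adj_mem_gridColumns {n c : ℕ} {C : Finset ℕ} (hc : c ∈ C) (hcn : c < n)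
    (v : Fin n × Fin 2) (hvc : (v.1 : ℕ) ≤ c + 1) (hcv : c ≤ v.1 + 1) :
    ∃ u ∈ gridColumns n C, (gridGraph n 2).Adj v u := by
  have := v.2.isLt
  by_cases hv : (v.1 : ℕ) = c
  · exact ⟨(v.1, ⟨1 - v.2, by omega⟩), by simpa [hv], gridGraph_two_adj.2 (by simp; omega)⟩
  · exact ⟨(⟨c, hcn⟩, v.2), by simpa, gridGraph_two_adj.2 (by simp; omega)⟩

theorem isOpenPacking_gridColumns {n : ℕ} {C : Finset ℕ}
    (hC : ∀ c ∈ C, ∀ c' ∈ C, c < c' → c + 3 ≤ c') :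
    (gridGraph n 2).IsOpenPacking (gridColumns n C) := by
  intro u hu v hv hne w huw hvw
  rw [mem_coe, mem_gridColumns] at hu hv
  rw [gridGraph_two_adj] at huw hvw
  have := hC _ hu _ hv; have := hC _ hv _ hu
  exact hne (Prod.ext (Fin.ext (by omega)) (Fin.ext (by omega)))

def gridPackingColumns (n : ℕ) : Finset ℕ :=
  (range ((n + 2) / 3)).image (3 * ·)

def gridDominatingColumns (n : ℕ) : Finset ℕ :=
  (range ((n + 2) / 3)).image fun t => min (3 * t + 1) (n - 1)

theorem card_gridColumns_gridPackingColumns (n : ℕ) :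
    #(gridColumns n (gridPackingColumns n)) = 2 * ((n + 2) / 3) := by
  rw [card_gridColumns, gridPackingColumns,
    card_image_of_injective _ (mul_right_injective₀ three_ne_zero), card_range]
  simp only [gridPackingColumns, mem_image, mem_range]
  omega

theorem isOpenPacking_gridPackingColumns (n : ℕ) :
    (gridGraph n 2).IsOpenPacking (gridColumns n (gridPackingColumns n)) := by
  refine isOpenPacking_gridColumns ?_
  simp only [gridPackingColumns, mem_image, mem_range]
  omega

theorem card_gridColumns_gridDominatingColumns (n : ℕ) :
    #(gridColumns n (gridDominatingColumns n)) = 2 * ((n + 2) / 3) := by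
  rw [card_gridColumns, gridDominatingColumns, card_image_of_injOn, card_range]
  · intro s hs t ht hst
    simp only [coe_range, Set.mem_Iio] at hs ht hst
    omega
  · simp only [gridDominatingColumns, mem_image, mem_range]
    omega

theorem isTotalDomSet_gridDominatingColumns (n : ℕ) :
    IsTotalDomSet (gridGraph n 2) (gridColumns n (gridDominatingColumns n)) := by
  intro v
  have := v.1.isLt
  refine exists_adj_mem_gridColumns
    (c := min (3 * min ((v.1 : ℕ) / 3) ((n + 2) / 3 - 1) + 1) (n - 1)) ?_ (by omega) v
    (by omega) (by omega)
  exact mem_image.2 ⟨_, mem_range.2 (by omega), rfl⟩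

theorem totalDomNum_gridGraph_two (n : ℕ) : totalDomNum (gridGraph n 2) = 2 * ((n + 2) / 3) := by
  rw [← card_gridColumns_gridDominatingColumns]
  exact totalDomNum_eq_of_isOpenPacking (isTotalDomSet_gridDominatingColumns n)
    (isOpenPacking_gridPackingColumns n)
    (by rw [card_gridColumns_gridPackingColumns, card_gridColumns_gridDominatingColumns])

theorem exists_dominating_gridGraph_two_delete_corner {n : ℕ} (hn : 2 ≤ n) (h : n % 3 = 1)
    {x : Fin n × Fin 2} (hx : (x.1 : ℕ) = n - 1) :
    ∃ D : Finset (Fin n × Fin 2), #D = 2 * ((n + 2) / 3) - 1 ∧ ↑D ⊆ {v | v ≠ x} ∧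
      ∀ v ∈ {v | v ≠ x}, ∃ u ∈ D, (gridGraph n 2).Adj v u := by
  have := x.2.isLt
  set C := (range (n / 3)).image (3 * · + 1)
  have hC : ∀ c ∈ C, c + 3 ≤ n := by
    simp only [C, mem_image, mem_range]
    omega
  set y : Fin n × Fin 2 := (⟨n - 2, by omega⟩, ⟨1 - x.2, by omega⟩)
  have hy : y ∉ gridColumns n C := fun hy => by
    have := hC _ (mem_gridColumns.1 hy)
    simp only [y] at this
    omega
  refine ⟨insert y (gridColumns n C), ?_, ?_, ?_⟩
  · rw [card_insert_of_notMem hy, card_gridColumns fun c hc => by have := hC c hc; omega,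
      card_image_of_injective _ fun s t hst => by simpa using hst, card_range]
    omega
  · intro u hu
    rcases mem_insert.1 hu with rfl | hu
    · exact fun hyx => by simp [y, Prod.ext_iff, Fin.ext_iff] at hyx; omega
    · exact fun hux => by have := hC _ (mem_gridColumns.1 hu); rw [hux] at this; omega
  · intro v hv
    have := v.1.isLt; have := v.2.isLt
    by_cases hvn : (v.1 : ℕ) = n - 1
    · have hvx : (v.2 : ℕ) ≠ x.2 := fun h2 => hv (Prod.ext (Fin.ext (by omega)) (Fin.ext h2))
      exact ⟨y, mem_insert_self _ _, gridGraph_two_adj.2 (by simp [y]; omega)⟩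
    · obtain ⟨u, hu, hvu⟩ := exists_adj_mem_gridColumns (C := C)
        (c := 3 * min ((v.1 : ℕ) / 3) (n / 3 - 1) + 1)
        (mem_image.2 ⟨_, mem_range.2 (by omega), rfl⟩) (by omega) v (by omega) (by omega)
      exact ⟨u, mem_insert_of_mem hu, hvu⟩

theorem totalDomNum_grid_two_delete_corner (n : ℕ) (hn : 2 ≤ n) (h : n % 3 = 1) (j : Fin 2) :
    totalDomNum ((gridGraph n 2).induce {v | v ≠ ((⟨n - 1, by omega⟩ : Fin n), j)}) =
      totalDomNum (gridGraph n 2) - 1 := by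
  set x : Fin n × Fin 2 := (⟨n - 1, by omega⟩, j)
  obtain ⟨D, hDcard, hDS, hD⟩ := exists_dominating_gridGraph_two_delete_corner hn h (x := x) rfl
  have hx : x ∈ gridColumns n (gridPackingColumns n) :=
    mem_gridColumns.2 (mem_image.2 ⟨n / 3, mem_range.2 (by omega), by simp only [x]; omega⟩)
  rw [totalDomNum_gridGraph_two, ← hDcard]
  refine totalDomNum_induce_eq_of_isOpenPacking hDS hD (fun v hv => (mem_erase.1 hv).1)
    ((isOpenPacking_gridPackingColumns n).subset (erase_subset x _)) ?_
  rw [card_erase_of_mem hx, card_gridColumns_gridPackingColumns, hDcard]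
end
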